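/- (Theorem 1, summed residual bound) Let ω ∈ (0,2) and θ ≥ 0 be such that δ = 2θ/ω + ((2−ω)/ω)·minᵢ Dᵢᵢ > 0, and suppose M ∈ ℝ is a lower bound for f. Let (xᵏ)ₖ≥0 be a sequence in ℝⁿ and (vᵏ⁺¹)ₖ≥0 vectors such that for every k, vᵏ⁺¹ is a subgradient of h at xᵏ⁺¹ and B xᵏ⁺¹ + b + C xᵏ + vᵏ⁺¹ = 0. Then for every k ≥ 1, (δ / (2‖C‖²)) · Σ_{i=0}^{k−1} ‖A xⁱ⁺¹ + b + vⁱ⁺¹‖² ≤ f(x⁰) − M. -/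

import Mathlib

/-!
With `d = xᵏ - xᵏ⁺¹`, the update equation and `A = B + C` turn the residual
`A xᵏ⁺¹ + b + vᵏ⁺¹` into `-C d`, so its norm is at most `‖C‖ ‖d‖`. Expanding the quadratic
part of `f` around `xᵏ⁺¹` and using the subgradient inequality for `h` gives
`f xᵏ - f xᵏ⁺¹ ≥ ⟪d, B d⟫/2 - ⟪d, C d⟫/2 = ⟪d, (B - Cᵀ) d⟫/2`, and
`B - Cᵀ = ((2 - ω) D + 2θ I)/ω` is diagonal with entries at least `δ`.
So each squared residual, scaled by `δ / (2‖C‖²)`, is paid for by the decrease of `f`, and the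
decreases telescope to `f x⁰ - f xᵏ ≤ f x⁰ - M`.
-/

open scoped RealInnerProductSpace
open Matrix Filter

noncomputable section

/-- Euclidean space ℝⁿ. -/
abbrev E (n : ℕ) := EuclideanSpace ℝ (Fin n)

/-- Matrix-vector multiplication, valued in Euclidean space. -/
def mulVecE {n : ℕ} (M : Matrix (Fin n) (Fin n) ℝ) (x : E n) : E n :=
  (WithLp.equiv 2 (Fin n → ℝ)).symm (M.mulVec ((WithLp.equiv 2 (Fin n → ℝ)) x))

/-- Operator (spectral) norm of a matrix. -/
def opNorm {n : ℕ} (M : Matrix (Fin n) (Fin n) ℝ) : ℝ :=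
  ‖Matrix.toEuclideanCLM (𝕜 := ℝ) M‖

/-- The diagonal part `D` of `A`. -/
def Dmat {n : ℕ} (A : Matrix (Fin n) (Fin n) ℝ) : Matrix (Fin n) (Fin n) ℝ :=
  Matrix.diagonal fun i => A i i

/-- The strictly lower triangular part `L` of `A`. -/
def Lmat {n : ℕ} (A : Matrix (Fin n) (Fin n) ℝ) : Matrix (Fin n) (Fin n) ℝ :=
  Matrix.of fun i j => if (j : ℕ) < (i : ℕ) then A i j else 0

/-- `B = L + (1/ω)(D + θI)`. -/
def Bmat {n : ℕ} (ω θ : ℝ) (A : Matrix (Fin n) (Fin n) ℝ) : Matrix (Fin n) (Fin n) ℝ :=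
  Lmat A + ω⁻¹ • (Dmat A + θ • (1 : Matrix (Fin n) (Fin n) ℝ))

/-- `C = Lᵀ + (1/ω)((ω−1)D − θI)`. -/
def Cmat {n : ℕ} (ω θ : ℝ) (A : Matrix (Fin n) (Fin n) ℝ) : Matrix (Fin n) (Fin n) ℝ :=
  (Lmat A)ᵀ + ω⁻¹ • ((ω - 1) • Dmat A - θ • (1 : Matrix (Fin n) (Fin n) ℝ))

/-- `v` is a subgradient of `h` at `z`. -/
def IsSubgradient {n : ℕ} (h : E n → ℝ) (v z : E n) : Prop :=
  ∀ y, h z + ⟪v, y - z⟫ ≤ h y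

/-- The composite objective `f(x) = (1/2)⟨x, Ax⟩ + ⟨b, x⟩ + h(x)`. -/
def fObj {n : ℕ} (A : Matrix (Fin n) (Fin n) ℝ) (b : E n) (h : E n → ℝ) (x : E n) : ℝ :=
  (1/2) * ⟪x, mulVecE A x⟫ + ⟪b, x⟫ + h x

/-- `z` is a triangle-proximal point of `x`: there is a subgradient `v` of `h` at `z`
with `Bz + b + Cx + v = 0`. -/
def IsTriangleProx {n : ℕ} (ω θ : ℝ) (A : Matrix (Fin n) (Fin n) ℝ) (b : E n)
    (h : E n → ℝ) (x z : E n) : Prop :=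
  ∃ v, IsSubgradient h v z ∧
    mulVecE (Bmat ω θ A) z + b + mulVecE (Cmat ω θ A) x + v = 0

section SplittingStep

variable {F : Type*} [NormedAddCommGroup F] [InnerProductSpace ℝ F]
  {A B C : F →ₗ[ℝ] F} {b x z v : F}

theorem splitting_step_residual (hBC : B + C = A) (heq : B z + b + C x + v = 0) :
    A z + b + v = -C (x - z) := by
  rw [← hBC, map_sub, ← sub_eq_zero, ← heq, LinearMap.add_apply]
  abel

theorem LinearMap.IsSymmetric.splitting_step_descent (hA : A.IsSymmetric) (hBC : B + C = A)
    {h : F → ℝ} (hv : ∀ y, h z + ⟪v, y - z⟫ ≤ h y) (heq : B z + b + C x + v = 0) :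
    (1 / 2) * (⟪x - z, B (x - z)⟫ - ⟪x - z, C (x - z)⟫)
      ≤ (1 / 2) * ⟪x, A x⟫ + ⟪b, x⟫ + h x - ((1 / 2) * ⟪z, A z⟫ + ⟪b, z⟫ + h z) := by
  obtain ⟨d, rfl⟩ : ∃ d, x = z + d := ⟨x - z, by abel⟩
  have hres := splitting_step_residual hBC heq
  have hsub := hv (z + d)
  simp only [add_sub_cancel_left] at hres hsub ⊢
  have hvd : ⟪v, d⟫ = -⟪C d, d⟫ - ⟪A z + b, d⟫ := by
    rw [eq_sub_of_add_eq' hres, inner_sub_left, inner_neg_left]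
  have hdAd : ⟪d, A d⟫ = ⟪d, B d⟫ + ⟪d, C d⟫ := by rw [← hBC, LinearMap.add_apply, inner_add_right]
  simp only [map_add, inner_add_left, inner_add_right] at hvd ⊢
  linarith [hA z d, real_inner_comm d (A z), real_inner_comm d (C d)]

end SplittingStep

section EuclideanMatrix

variable {ι : Type*} [Fintype ι] [DecidableEq ι]

theorem Matrix.IsSymm.isSymmetric_toEuclideanLin {A : Matrix ι ι ℝ} (hA : A.IsSymm) :
    (toEuclideanLin A).IsSymmetric :=
  isSymmetric_toEuclideanLin_iff.mpr (isHermitian_iff_isSymm.mpr hA)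

theorem Matrix.inner_toEuclideanLin_transpose (M : Matrix ι ι ℝ) (x y : EuclideanSpace ℝ ι) :
    ⟪x, toEuclideanLin Mᵀ y⟫ = ⟪toEuclideanLin M x, y⟫ := by
  rw [← conjTranspose_eq_transpose_of_trivial, toEuclideanLin_conjTranspose_eq_adjoint,
    LinearMap.adjoint_inner_right]

theorem Matrix.mul_norm_sq_le_inner_toEuclideanLin_diagonal {c : ℝ} {w : ι → ℝ}
    (hw : ∀ i, c ≤ w i) (x : EuclideanSpace ℝ ι) :
    c * ‖x‖ ^ 2 ≤ ⟪x, toEuclideanLin (diagonal w) x⟫ := by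
  rw [EuclideanSpace.norm_sq_eq, Finset.mul_sum, EuclideanSpace.inner_eq_star_dotProduct,
    ofLp_toLpLin, toLin'_apply]
  refine Finset.sum_le_sum fun i _ => ?_
  simp only [mulVec_diagonal, Real.norm_eq_abs, sq_abs, star_trivial]
  nlinarith [hw i, sq_nonneg (x i)]

end EuclideanMatrix

theorem mulVecE_eq_toEuclideanLin {n : ℕ} (M : Matrix (Fin n) (Fin n) ℝ) (x : E n) :
    mulVecE M x = toEuclideanLin M x := rfl

theorem norm_mulVecE_le {n : ℕ} (M : Matrix (Fin n) (Fin n) ℝ) (x : E n) :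
    ‖mulVecE M x‖ ≤ opNorm M * ‖x‖ :=
  (toEuclideanCLM (𝕜 := ℝ) M).le_opNorm x

theorem Lmat_add_transpose_add_Dmat {n : ℕ} {A : Matrix (Fin n) (Fin n) ℝ} (hA : A.IsSymm) :
    Lmat A + (Lmat A)ᵀ + Dmat A = A := by
  ext i j
  simp only [Matrix.add_apply, Lmat, transpose_apply, of_apply, Dmat, diagonal_apply]
  rcases lt_trichotomy j i with hji | rfl | hij
  · simp [hji, hji.not_gt, hji.ne']
  · simp
  · simp [hij, hij.not_gt, hij.ne, hA.apply i j]

theorem Bmat_add_Cmat {n : ℕ} {ω : ℝ} (hω : ω ≠ 0) (θ : ℝ) {A : Matrix (Fin n) (Fin n) ℝ}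
    (hA : A.IsSymm) : Bmat ω θ A + Cmat ω θ A = A := by
  calc Bmat ω θ A + Cmat ω θ A = Lmat A + (Lmat A)ᵀ + ω⁻¹ • (ω • Dmat A) := by
        unfold Bmat Cmat; module
    _ = A := by rw [inv_smul_smul₀ hω, Lmat_add_transpose_add_Dmat hA]

theorem Bmat_sub_transpose_Cmat {n : ℕ} (ω θ : ℝ) (A : Matrix (Fin n) (Fin n) ℝ) :
    Bmat ω θ A - (Cmat ω θ A)ᵀ = diagonal fun i => 2 * θ / ω + (2 - ω) / ω * A i i := by
  have hD : (Dmat A)ᵀ = Dmat A := diagonal_transpose _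
  calc Bmat ω θ A - (Cmat ω θ A)ᵀ = ω⁻¹ • ((2 - ω) • Dmat A + (2 * θ) • (1 : Matrix _ _ ℝ)) := by
        simp only [Bmat, Cmat, transpose_add, transpose_transpose, transpose_smul, transpose_sub,
          transpose_one, hD]
        module
    _ = _ := by
        ext i j
        rcases eq_or_ne i j with rfl | hij
        · simp [Dmat]; ring
        · simp [Dmat, hij]

section SORSplitting

variable {n : ℕ} {A : Matrix (Fin n) (Fin n) ℝ} {b x z v : E n} {ω : ℝ}

theorem sor_step_descent (hA : A.IsSymm) {h : E n → ℝ} (hω : ω ∈ Set.Ioo (0 : ℝ) 2) (θ : ℝ)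
    (hv : IsSubgradient h v z)
    (heq : mulVecE (Bmat ω θ A) z + b + mulVecE (Cmat ω θ A) x + v = 0) :
    (2 * θ / ω + (2 - ω) / ω * ⨅ i, A i i) / 2 * ‖x - z‖ ^ 2
      ≤ fObj A b h x - fObj A b h z := by
  set δ := 2 * θ / ω + (2 - ω) / ω * ⨅ i, A i i
  rw [mulVecE_eq_toEuclideanLin, mulVecE_eq_toEuclideanLin] at heq
  set B := toEuclideanLin (Bmat ω θ A)
  set C := toEuclideanLin (Cmat ω θ A)
  have hδ_le : ∀ i, δ ≤ 2 * θ / ω + (2 - ω) / ω * A i i := fun i =>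
    add_le_add_right (mul_le_mul_of_nonneg_left (ciInf_le (Finite.bddBelow_range _) i)
      (div_nonneg (sub_nonneg.mpr hω.2.le) hω.1.le)) _
  have hform : δ * ‖x - z‖ ^ 2 ≤ ⟪x - z, B (x - z)⟫ - ⟪x - z, C (x - z)⟫ := by
    calc δ * ‖x - z‖ ^ 2 ≤ ⟪x - z, toEuclideanLin (Bmat ω θ A - (Cmat ω θ A)ᵀ) (x - z)⟫ := by
          rw [Bmat_sub_transpose_Cmat]
          exact mul_norm_sq_le_inner_toEuclideanLin_diagonal hδ_le _
      _ = _ := by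
          rw [map_sub toEuclideanLin, LinearMap.sub_apply, inner_sub_right,
            inner_toEuclideanLin_transpose, real_inner_comm (x - z) (C (x - z))]
  have hdesc := hA.isSymmetric_toEuclideanLin.splitting_step_descent
    (by rw [← map_add, Bmat_add_Cmat hω.1.ne' θ hA]) hv heq
  calc δ / 2 * ‖x - z‖ ^ 2 ≤ (1 / 2) * (⟪x - z, B (x - z)⟫ - ⟪x - z, C (x - z)⟫) := by
        linarith
    _ ≤ fObj A b h x - fObj A b h z := hdesc

theorem norm_sor_residual_le (hA : A.IsSymm) (hω : ω ≠ 0) {θ : ℝ}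
    (heq : mulVecE (Bmat ω θ A) z + b + mulVecE (Cmat ω θ A) x + v = 0) :
    ‖mulVecE A z + b + v‖ ≤ opNorm (Cmat ω θ A) * ‖x - z‖ := by
  rw [mulVecE_eq_toEuclideanLin, mulVecE_eq_toEuclideanLin] at heq
  rw [mulVecE_eq_toEuclideanLin,
    splitting_step_residual (by rw [← map_add, Bmat_add_Cmat hω θ hA]) heq, norm_neg]
  exact norm_mulVecE_le (Cmat ω θ A) (x - z)

end SORSplitting

theorem div_mul_sq_le_of_le_mul {δ a c e : ℝ} (hδ : 0 ≤ δ) (ha : 0 ≤ a) (hace : a ≤ c * e) :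
    δ / (2 * c ^ 2) * a ^ 2 ≤ δ / 2 * e ^ 2 := by
  rcases eq_or_ne c 0 with rfl | hc
  · rw [zero_pow two_ne_zero, mul_zero, div_zero, zero_mul]
    positivity
  calc δ / (2 * c ^ 2) * a ^ 2 ≤ δ / (2 * c ^ 2) * (c * e) ^ 2 := by gcongr
    _ = δ / 2 * e ^ 2 := by field_simp

theorem msm_summed_residual_bound_general {n : ℕ}
    (A : Matrix (Fin n) (Fin n) ℝ) (hA : A.IsSymm) (b : E n) (h : E n → ℝ)
    (ω θ : ℝ) (hω : ω ∈ Set.Ioo (0 : ℝ) 2)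
    (δ : ℝ) (hδ : δ = 2 * θ / ω + (2 - ω) / ω * ⨅ i, A i i) (hδpos : 0 < δ)
    (M : ℝ) (hM : ∀ y : E n, M ≤ fObj A b h y)
    (x v : ℕ → E n)
    (hv : ∀ k : ℕ, IsSubgradient h (v (k + 1)) (x (k + 1)))
    (heq : ∀ k : ℕ, mulVecE (Bmat ω θ A) (x (k + 1)) + b
        + mulVecE (Cmat ω θ A) (x k) + v (k + 1) = 0) :
    ∀ k : ℕ, 1 ≤ k →
      δ / (2 * opNorm (Cmat ω θ A) ^ 2)
          * ∑ i ∈ Finset.range k, ‖mulVecE A (x (i + 1)) + b + v (i + 1)‖ ^ 2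
        ≤ fObj A b h (x 0) - M := by
  intro k _
  have hstep : ∀ i, δ / (2 * opNorm (Cmat ω θ A) ^ 2)
      * ‖mulVecE A (x (i + 1)) + b + v (i + 1)‖ ^ 2
        ≤ fObj A b h (x i) - fObj A b h (x (i + 1)) := fun i =>
    (div_mul_sq_le_of_le_mul hδpos.le (norm_nonneg _)
      (norm_sor_residual_le hA hω.1.ne' (heq i))).trans
      (hδ ▸ sor_step_descent hA hω θ (hv i) (heq i))
  calc _ ≤ ∑ i ∈ Finset.range k, (fObj A b h (x i) - fObj A b h (x (i + 1))) := by
        rw [Finset.mul_sum]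
        exact Finset.sum_le_sum fun i _ => hstep i
    _ = fObj A b h (x 0) - fObj A b h (x k) := Finset.sum_range_sub' _ k
    _ ≤ fObj A b h (x 0) - M := by linarith [hM (x k)]

/-- Theorem 1, summed residual bound. -/
theorem msm_summed_residual_bound {n : ℕ} (hn : 0 < n)
    (A : Matrix (Fin n) (Fin n) ℝ) (hA : A.IsSymm) (b : E n) (h : E n → ℝ)
    (ω θ : ℝ) (hω : ω ∈ Set.Ioo (0 : ℝ) 2) (hθ : 0 ≤ θ)
    (δ : ℝ) (hδ : δ = 2 * θ / ω + (2 - ω) / ω * ⨅ i, A i i) (hδpos : 0 < δ)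
    (M : ℝ) (hM : ∀ y : E n, M ≤ fObj A b h y)
    (x v : ℕ → E n)
    (hv : ∀ k : ℕ, IsSubgradient h (v (k + 1)) (x (k + 1)))
    (heq : ∀ k : ℕ, mulVecE (Bmat ω θ A) (x (k + 1)) + b
        + mulVecE (Cmat ω θ A) (x k) + v (k + 1) = 0) :
    ∀ k : ℕ, 1 ≤ k →
      δ / (2 * opNorm (Cmat ω θ A) ^ 2)
          * ∑ i ∈ Finset.range k, ‖mulVecE A (x (i + 1)) + b + v (i + 1)‖ ^ 2
        ≤ fObj A b h (x 0) - M :=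
  msm_summed_residual_bound_general A hA b h ω θ hω δ hδ hδpos M hM x v hv heq
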